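/- arXiv:1709.00258 — 3 statements merged into one kernel-verified Lean document; each statement's English description precedes it below -/
import Mathlib

section
/- The matrix h = (e^{-|q_i - q_j|})_{i,j=1,...,n} is positive definite whenever the real numbers q_1, ..., q_n are pairwise distinct. -/
/-!
Since `exp (-|s - t|) = exp (-s) * exp (2 * min s t) * exp (-t)`, after sorting the points
increasingly the matrix is a diagonal congruence of the min-kernel `a (min i j)` with
`a k = exp (2 * q k)` strictly increasing and positive. Writing `a` as partial sums
`a m = ∑ k ≤ m, d k` of positive increments, that kernel is `L * Lᵀ` for the lower triangular
matrix `L i k = √(d k)` (for `k ≤ i`), which is invertible.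
-/

open Finset Matrix Real

lemma Matrix.posDef_of_sum_Iic_min {ι : Type*} [Fintype ι] [LinearOrder ι]
    [LocallyFiniteOrderBot ι] {d : ι → ℝ} (hd : ∀ k, 0 < d k) :
    (of fun i j : ι => ∑ k ∈ Iic (min i j), d k).PosDef := by
  set L : Matrix ι ι ℝ := of fun i k => if k ≤ i then √(d k) else 0
  have hgram : (of fun i j : ι => ∑ k ∈ Iic (min i j), d k) = L * Lᴴ := by
    ext i j
    simp only [L, of_apply, mul_apply, conjTranspose_apply, star_trivial, mul_ite, ite_mul,
      zero_mul, mul_zero, ← sum_filter, mul_self_sqrt (hd _).le]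
    congr 1
    ext k
    simp [and_comm]
  have hL : IsUnit L := by
    rw [isUnit_iff_isUnit_det, det_of_isLowerTriangular L fun i k hik => if_neg hik.not_ge]
    exact (prod_pos fun k _ => by simpa [L] using hd k).ne'.isUnit
  rw [hgram]
  exact PosDef.mul_conjTranspose_self L (vecMul_injective_of_isUnit hL)

lemma Matrix.posDef_min_of_strictMono {n : ℕ} {a : Fin n → ℝ} (ha : StrictMono a)
    (ha0 : ∀ k, 0 < a k) : (of fun i j : Fin n => a (min i j)).PosDef := by
  set g : Fin (n + 1) → ℝ := Fin.cons 0 a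
  have hg : StrictMono g := Fin.strictMono_cons.2 ⟨ha0, ha⟩
  convert posDef_of_sum_Iic_min (d := fun k : Fin n => g k.succ - g k.castSucc)
    fun k => sub_pos.2 (hg k.castSucc_lt_succ) using 1
  ext i j
  rw [of_apply, of_apply, Fin.sum_Iic_sub]
  simp [g]

lemma Real.exp_neg_abs_sub (s t : ℝ) :
    exp (-|s - t|) = exp (-s) * exp (2 * min s t) * exp (-t) := by
  rw [← exp_add, ← exp_add]
  congr 1
  rcases le_total s t with h | h
  · rw [min_eq_left h, abs_of_nonpos (sub_nonpos.2 h)]; ring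
  · rw [min_eq_right h, abs_of_nonneg (sub_nonneg.2 h)]; ring

lemma Matrix.posDef_exp_neg_abs_sub_of_strictMono {n : ℕ} {p : Fin n → ℝ} (hp : StrictMono p) :
    (of fun i j : Fin n => exp (-|p i - p j|)).PosDef := by
  set D : Matrix (Fin n) (Fin n) ℝ := diagonal fun i => exp (-p i)
  have hD : IsUnit D := isUnit_diagonal.2 (Pi.isUnit_iff.2 fun i => (exp_pos _).ne'.isUnit)
  have hfactor : (of fun i j : Fin n => exp (-|p i - p j|))
      = star D * of (fun i j => exp (2 * p (min i j))) * D := by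
    ext i j
    simp [D, star_eq_conjTranspose, diagonal_mul, mul_diagonal, exp_neg_abs_sub,
      hp.monotone.map_min]
  rw [hfactor, IsUnit.posDef_star_left_conjugate_iff hD]
  exact posDef_min_of_strictMono (a := fun k => exp (2 * p k))
    (fun i j hij => exp_lt_exp.2 (by linarith [hp hij])) fun k => exp_pos _

/-- The matrix `h = (exp (-|q i - q j|))` is positive definite whenever the
real numbers `q 1, …, q n` are pairwise distinct. -/
theorem stmt_0 (n : ℕ) (q : Fin n → ℝ)
    (hq : ∀ i j : Fin n, i ≠ j → q i ≠ q j) :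
    (Matrix.of fun i j : Fin n => Real.exp (-|q i - q j|)).PosDef := by
  have hinj : Function.Injective q := fun i j => not_imp_not.1 (hq i j)
  set σ := Tuple.sort q
  have hsorted : StrictMono (q ∘ σ) :=
    (Tuple.monotone_sort q).strictMono_of_injective (hinj.comp σ.injective)
  convert (posDef_exp_neg_abs_sub_of_strictMono hsorted).submatrix σ.symm.injective using 1
  ext i j
  simp
end

section
/- For a 2-peakon with s = q_1 - q_2 > 0, unit energy h(p,p) = 1, momentum c = p_1 + p_2 with |c| < 1, and p_1 - p_2 < 0, the difference s(t) satisfies ṡ = -√((2 - c²(1+e^{-s}))(1 - e^{-s})). -/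
open Real

/-- For a 2-peakon with `s = q₁ - q₂ > 0`, the algebraic system
`g(q̇,(1,1)) = c`, `g(q̇,q̇) = 1`, `q̇₁ - q̇₂ < 0`, where
`g = (1/(1-e^{-2s})) [[1,-e^{-s}],[-e^{-s},1]]`, implies
`q̇₁ - q̇₂ = -√((2 - c²(1+e^{-s}))(1 - e^{-s}))`. -/
theorem stmt_9 (s c : ℝ) (hs : 0 < s) (v : ℝ × ℝ)
    (G : ℝ × ℝ → ℝ × ℝ → ℝ)
    (hG : ∀ w z : ℝ × ℝ, G w z =
      (w.1 * z.1 - Real.exp (-s) * (w.1 * z.2 + w.2 * z.1) + w.2 * z.2) /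
        (1 - Real.exp (-2 * s)))
    (hmom : G v (1, 1) = c)
    (hunit : G v v = 1)
    (hdir : v.1 - v.2 < 0) :
    v.1 - v.2 = -Real.sqrt ((2 - c ^ 2 * (1 + Real.exp (-s))) * (1 - Real.exp (-s))) := by
  set a : ℝ := Real.exp (-s) with ha_def
  have ha0 : 0 < a := Real.exp_pos _
  have ha1 : a < 1 := by
    rw [ha_def]
    have : -s < 0 := by linarith
    simpa using Real.exp_lt_one_iff.mpr this
  have hexp2 : Real.exp (-2 * s) = a ^ 2 := by
    rw [ha_def, ← Real.exp_nat_mul]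
    ring_nf
  have hD : (0:ℝ) < 1 - a ^ 2 := by nlinarith
  rw [hG] at hmom hunit
  rw [hexp2] at hmom hunit
  have hDne : (1 - a ^ 2) ≠ 0 := ne_of_gt hD
  have e1 : v.1 + v.2 = c * (1 + a) := by
    field_simp at hmom
    have h1a : (1 - a) ≠ 0 := by nlinarith
    nlinarith [hmom, sq_nonneg (1 - a)]
  have e2 : v.1 ^ 2 + v.2 ^ 2 - 2 * a * (v.1 * v.2) = 1 - a ^ 2 := by
    field_simp at hunit
    nlinarith [hunit]
  have e1sq : (v.1 + v.2) ^ 2 = c ^ 2 * (1 + a) ^ 2 := by rw [e1]; ring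
  have h1a : (0:ℝ) < 1 + a := by linarith
  have hP' : (1 + a) * (2 * (v.1 * v.2)) = (1 + a) * (c ^ 2 * (1 + a) - (1 - a)) := by
    linear_combination e1sq - e2
  have hP : 2 * (v.1 * v.2) = c ^ 2 * (1 + a) - (1 - a) :=
    mul_left_cancel₀ (ne_of_gt h1a) hP'
  have key : (v.1 - v.2) ^ 2 = (2 - c ^ 2 * (1 + a)) * (1 - a) := by
    linear_combination e1sq - 2 * hP
  rw [← key, Real.sqrt_sq_eq_abs, abs_of_neg hdir]
  ring
end

section
/- For the 2-peakon metric on {q_1 > q_2}, if a unit-speed geodesic has conserved momentum c with |c| > 1, then q_1(t) - q_2(t) stays bounded away from 0 for all t: there exists ε > 0 with q_1(t) - q_2(t) > ε. -/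
open Real

/-- For the 2-peakon metric on `{q₁ > q₂}`: along a unit-speed trajectory
(`h(p,p) = 1` for all times) with conserved momentum `c = p₁ + p₂` satisfying
`|c| > 1`, the separation `s = q₁ - q₂` stays bounded away from `0`, so no
collision occurs. -/
theorem stmt_17 (c : ℝ) (hc : 1 < |c|) (s p₁ p₂ : ℝ → ℝ)
    (hspos : ∀ t : ℝ, 0 ≤ t → 0 < s t)
    (hunit : ∀ t : ℝ, 0 ≤ t →
      p₁ t ^ 2 + 2 * Real.exp (-s t) * p₁ t * p₂ t + p₂ t ^ 2 = 1)
    (hmom : ∀ t : ℝ, 0 ≤ t → p₁ t + p₂ t = c) :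
    ∃ ε > 0, ∀ t : ℝ, 0 ≤ t → ε < s t := by
  have hc2 : 1 < c ^ 2 := by
    have := sq_abs c
    nlinarith [hc, abs_nonneg c]
  -- key pointwise bound: (1 + exp(-s t)) * c^2 ≤ 2
  have key : ∀ t : ℝ, 0 ≤ t → (1 + Real.exp (-s t)) * c ^ 2 ≤ 2 := by
    intro t ht
    have h1 := hunit t ht
    have h2 := hmom t ht
    have he : Real.exp (-s t) ≤ 1 := by
      have : -s t ≤ 0 := by linarith [hspos t ht]
      simpa using Real.exp_le_one_iff.mpr this
    have hid : (1 + Real.exp (-s t)) * (p₁ t + p₂ t) ^ 2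
        + (1 - Real.exp (-s t)) * (p₁ t - p₂ t) ^ 2 = 2 := by
      linear_combination 2 * h1
    have hnn : 0 ≤ (1 - Real.exp (-s t)) * (p₁ t - p₂ t) ^ 2 :=
      mul_nonneg (by linarith) (sq_nonneg _)
    rw [← h2]
    linarith
  have hA : (2 - c ^ 2) / c ^ 2 > 0 := by
    have h0 := key 0 le_rfl
    have := Real.exp_pos (-s 0)
    have hc2' : (0:ℝ) < c ^ 2 := by positivity
    have : 2 - c ^ 2 > 0 := by nlinarith
    positivity
  set A := (2 - c ^ 2) / c ^ 2 with hAdef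
  have hA1 : A < 1 := by
    rw [hAdef, div_lt_one (by positivity)]
    linarith
  have hlog : Real.log A < 0 := Real.log_neg hA hA1
  refine ⟨-Real.log A / 2, by linarith, ?_⟩
  intro t ht
  have h := key t ht
  have hc2' : (0:ℝ) < c ^ 2 := by positivity
  have hE : Real.exp (-s t) ≤ A := by
    rw [hAdef, le_div_iff₀ hc2']
    nlinarith
  have : -s t ≤ Real.log A := by
    have := Real.log_le_log (Real.exp_pos _) hE
    simpa [Real.log_exp] using this
  linarith
end
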